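/- Suppose ρ_{ABC} is a density matrix on a tripartite finite-dimensional system and suppose the operator 𝓘_A := Tr_{BC}(ρ_{ABC} Ĥ_{A:C|B}) is positive semidefinite, where Ĥ_{A:C|B} = Ĥ_{AB} + Ĥ_{BC} − Ĥ_B − Ĥ_{ABC} and Ĥ_X = −(log ρ_X) ⊗ I_{X^c}. Then for any operator O_A supported on A, |Tr(ρ_{ABC} Ĥ_{A:C|B} (O_A ⊗ I_{BC}))| ≤ ‖O_A‖_∞ · I(A:C|B), where I(A:C|B) = S_{AB} + S_{BC} − S_B − S_{ABC} is the conditional mutual information with S_X = −Tr(ρ_X log ρ_X). -/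

import Mathlib

open scoped Matrix.Norms.L2Operator ComplexOrder
open Matrix

/-- Logarithm of a matrix, defined via the spectral decomposition when the matrix is
Hermitian (and junk value `0` otherwise). -/
noncomputable def matLog {n : Type*} [Fintype n] [DecidableEq n]
    (M : Matrix n n ℂ) : Matrix n n ℂ :=
  if h : M.IsHermitian then
    (h.eigenvectorUnitary : Matrix n n ℂ) *
      Matrix.diagonal (fun i => (Real.log (h.eigenvalues i) : ℂ)) *
      star (h.eigenvectorUnitary : Matrix n n ℂ)
  else 0

section Tripartite

variable {A B C : Type*} [Fintype A] [Fintype B] [Fintype C]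
  [DecidableEq A] [DecidableEq B] [DecidableEq C]

/-- Reduced density matrix on `A ⊗ B` (partial trace over `C`). -/
noncomputable def rhoAB (ρ : Matrix (A × B × C) (A × B × C) ℂ) : Matrix (A × B) (A × B) ℂ :=
  fun i j => ∑ c, ρ (i.1, i.2, c) (j.1, j.2, c)

/-- Reduced density matrix on `B ⊗ C` (partial trace over `A`). -/
noncomputable def rhoBC (ρ : Matrix (A × B × C) (A × B × C) ℂ) : Matrix (B × C) (B × C) ℂ :=
  fun i j => ∑ a, ρ (a, i.1, i.2) (a, j.1, j.2)

/-- Reduced density matrix on `B`. -/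
noncomputable def rhoB (ρ : Matrix (A × B × C) (A × B × C) ℂ) : Matrix B B ℂ :=
  fun b b' => ∑ a, ∑ c, ρ (a, b, c) (a, b', c)

/-- Partial trace over `B ⊗ C`, giving an operator on `A`. -/
noncomputable def ptraceBC (M : Matrix (A × B × C) (A × B × C) ℂ) : Matrix A A ℂ :=
  fun a a' => ∑ b, ∑ c, M (a, b, c) (a', b, c)

/-- Embed an operator on `A ⊗ B` into `A ⊗ B ⊗ C` by tensoring with the identity. -/
def embedAB (M : Matrix (A × B) (A × B) ℂ) : Matrix (A × B × C) (A × B × C) ℂ :=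
  fun i j => if i.2.2 = j.2.2 then M (i.1, i.2.1) (j.1, j.2.1) else 0

/-- Embed an operator on `B ⊗ C` into `A ⊗ B ⊗ C` by tensoring with the identity. -/
def embedBC (M : Matrix (B × C) (B × C) ℂ) : Matrix (A × B × C) (A × B × C) ℂ :=
  fun i j => if i.1 = j.1 then M i.2 j.2 else 0

/-- Embed an operator on `B` into `A ⊗ B ⊗ C` by tensoring with the identity. -/
def embedB (M : Matrix B B ℂ) : Matrix (A × B × C) (A × B × C) ℂ :=
  fun i j => if i.1 = j.1 ∧ i.2.2 = j.2.2 then M i.2.1 j.2.1 else 0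

/-- Embed an operator on `A` into `A ⊗ B ⊗ C` by tensoring with the identity. -/
def embedA (M : Matrix A A ℂ) : Matrix (A × B × C) (A × B × C) ℂ :=
  fun i j => if i.2 = j.2 then M i.1 j.1 else 0

/-- The entanglement spectrum `Ĥ_{AB} = −(log ρ_{AB}) ⊗ I_C`, as an operator on the
full system. -/
noncomputable def HhatAB (ρ : Matrix (A × B × C) (A × B × C) ℂ) :
    Matrix (A × B × C) (A × B × C) ℂ := embedAB (-(matLog (rhoAB ρ)))

/-- `Ĥ_{BC} = −(log ρ_{BC}) ⊗ I_A`. -/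
noncomputable def HhatBC (ρ : Matrix (A × B × C) (A × B × C) ℂ) :
    Matrix (A × B × C) (A × B × C) ℂ := embedBC (-(matLog (rhoBC ρ)))

/-- `Ĥ_B = −(log ρ_B) ⊗ I_{AC}`. -/
noncomputable def HhatB (ρ : Matrix (A × B × C) (A × B × C) ℂ) :
    Matrix (A × B × C) (A × B × C) ℂ := embedB (-(matLog (rhoB ρ)))

/-- `Ĥ_{ABC} = −log ρ_{ABC}`. -/
noncomputable def HhatABC (ρ : Matrix (A × B × C) (A × B × C) ℂ) :
    Matrix (A × B × C) (A × B × C) ℂ := -(matLog ρ)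

/-- The conditional mutual spectrum `Ĥ_{A:C|B} = Ĥ_{AB} + Ĥ_{BC} − Ĥ_B − Ĥ_{ABC}`. -/
noncomputable def HhatACB (ρ : Matrix (A × B × C) (A × B × C) ℂ) :
    Matrix (A × B × C) (A × B × C) ℂ :=
  HhatAB ρ + HhatBC ρ - HhatB ρ - HhatABC ρ

/-- Von Neumann entropy of a state `σ`: `S = −Tr(σ log σ)`. -/
noncomputable def vnEntropy {n : Type*} [Fintype n] [DecidableEq n]
    (σ : Matrix n n ℂ) : ℝ := -(Matrix.trace (σ * matLog σ)).re

/-- Conditional mutual information `I(A:C|B) = S_{AB} + S_{BC} − S_B − S_{ABC}`. -/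
noncomputable def condMutualInfo (ρ : Matrix (A × B × C) (A × B × C) ℂ) : ℝ :=
  vnEntropy (rhoAB ρ) + vnEntropy (rhoBC ρ) - vnEntropy (rhoB ρ) - vnEntropy ρ

end Tripartite

/-!
Partial traces turn `Tr(ρ (X ⊗ I))` into `Tr(ρ_X X)`, so `Tr(ρ Ĥ_{A:C|B} (O ⊗ I)) = Tr(𝓘_A O)`
and `Tr 𝓘_A = Tr(ρ Ĥ_{A:C|B}) = I(A:C|B)`. For positive semidefinite `𝓘_A = U D U*` the trace
`Tr(𝓘_A O)` is a combination of the diagonal entries of `U* O U` with the nonnegative weights `D`,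
and each such entry is bounded by `‖U* O U‖ = ‖O‖`.
-/

namespace Matrix

variable {m n 𝕜 : Type*} [Fintype m] [Fintype n] [RCLike 𝕜]

lemma norm_apply_le_l2_opNorm [DecidableEq n] (M : Matrix m n 𝕜) (i : m) (j : n) :
    ‖M i j‖ ≤ ‖M‖ :=
  calc ‖M i j‖ = ‖(EuclideanSpace.equiv m 𝕜).symm (M *ᵥ Pi.single j 1) i‖ := by simp
    _ ≤ ‖(EuclideanSpace.equiv m 𝕜).symm (M *ᵥ EuclideanSpace.single j 1)‖ :=
      PiLp.norm_apply_le _ _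
    _ ≤ ‖M‖ * ‖EuclideanSpace.single j (1 : 𝕜)‖ := l2_opNorm_mulVec _ _
    _ = ‖M‖ := by simp

lemma PosSemidef.norm_trace_mul_le [DecidableEq n] {N : Matrix n n 𝕜} (hN : N.PosSemidef)
    (O : Matrix n n 𝕜) : ‖trace (N * O)‖ ≤ ‖O‖ * RCLike.re (trace N) := by
  set U : Matrix n n 𝕜 := ↑hN.1.eigenvectorUnitary
  set D : Matrix n n 𝕜 := diagonal (RCLike.ofReal ∘ hN.1.eigenvalues)
  have hU : U ∈ unitary (Matrix n n 𝕜) := hN.1.eigenvectorUnitary.2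
  have htrace : trace (N * O) = ∑ i, (hN.1.eigenvalues i : 𝕜) * (star U * O * U) i i :=
    calc trace (N * O) = trace (U * (D * (star U * O))) := by
          conv_lhs => rw [hN.1.spectral_theorem, Unitary.conjStarAlgAut_apply]
          simp only [U, D, mul_assoc]
      _ = trace (D * (star U * O * U)) := by rw [trace_mul_comm, mul_assoc, mul_assoc]
      _ = _ := by simp [D, trace, diagonal_mul]
  have hconj : ‖star U * O * U‖ = ‖O‖ := by
    rw [CStarRing.norm_mul_mem_unitary _ hU,
      CStarRing.norm_mem_unitary_mul _ (Unitary.star_mem hU)]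
  rw [htrace, hN.1.trace_eq_sum_eigenvalues, map_sum, Finset.mul_sum]
  refine (norm_sum_le _ _).trans (Finset.sum_le_sum fun i _ => ?_)
  rw [norm_mul, RCLike.norm_ofReal, abs_of_nonneg (hN.eigenvalues_nonneg i), RCLike.ofReal_re,
    mul_comm]
  exact mul_le_mul_of_nonneg_right (hconj ▸ norm_apply_le_l2_opNorm _ i i)
    (hN.eigenvalues_nonneg i)

end Matrix

section Tripartite

variable {A B C : Type*} [Fintype A] [Fintype B] [Fintype C]

lemma trace_mul_embedA [DecidableEq B] [DecidableEq C]
    (M : Matrix (A × B × C) (A × B × C) ℂ) (O : Matrix A A ℂ) :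
    trace (M * embedA O) = trace (ptraceBC M * O) := by
  simp only [trace, diag_apply, mul_apply, embedA, ptraceBC, mul_ite, mul_zero,
    Fintype.sum_prod_type, Finset.sum_ite_eq', Finset.mem_univ, ↓reduceIte, Finset.sum_mul]
  exact Finset.sum_congr rfl fun _ _ => Finset.sum_comm_cycle

lemma trace_mul_embedAB [DecidableEq C]
    (M : Matrix (A × B × C) (A × B × C) ℂ) (N : Matrix (A × B) (A × B) ℂ) :
    trace (M * embedAB N) = trace (rhoAB M * N) := by
  simp only [trace, diag_apply, mul_apply, embedAB, rhoAB, mul_ite, mul_zero,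
    Fintype.sum_prod_type, Finset.sum_ite_eq', Finset.mem_univ, ↓reduceIte, Finset.sum_mul]
  exact Finset.sum_congr rfl fun _ _ => Finset.sum_congr rfl fun _ _ =>
    Finset.sum_comm_cycle.symm

lemma trace_mul_embedBC [DecidableEq A]
    (M : Matrix (A × B × C) (A × B × C) ℂ) (N : Matrix (B × C) (B × C) ℂ) :
    trace (M * embedBC N) = trace (rhoBC M * N) := by
  simp only [trace, diag_apply, mul_apply, embedBC, rhoBC, mul_ite, mul_zero,
    Fintype.sum_prod_type, Finset.sum_ite_irrel, Finset.sum_const_zero, Finset.sum_ite_eq',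
    Finset.mem_univ, ↓reduceIte, Prod.mk.eta, Finset.sum_mul]
  simp_rw [Finset.sum_comm (γ := A)]

lemma trace_mul_embedB [DecidableEq A] [DecidableEq C]
    (M : Matrix (A × B × C) (A × B × C) ℂ) (N : Matrix B B ℂ) :
    trace (M * embedB N) = trace (rhoB M * N) := by
  simp only [trace, diag_apply, mul_apply, embedB, rhoB, ite_and, mul_ite, mul_zero,
    Fintype.sum_prod_type, Finset.sum_ite_irrel, Finset.sum_ite_eq', Finset.mem_univ,
    ↓reduceIte, Finset.sum_const_zero, Finset.sum_mul]
  simp_rw [Finset.sum_comm (γ := C)]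
  exact Finset.sum_comm_cycle.symm

lemma trace_ptraceBC (M : Matrix (A × B × C) (A × B × C) ℂ) :
    trace (ptraceBC M) = trace M := by
  simp only [trace, diag_apply, ptraceBC, Fintype.sum_prod_type]

lemma re_trace_mul_HhatACB [DecidableEq A] [DecidableEq B] [DecidableEq C]
    (ρ : Matrix (A × B × C) (A × B × C) ℂ) :
    (trace (ρ * HhatACB ρ)).re = condMutualInfo ρ := by
  simp only [HhatACB, HhatAB, HhatBC, HhatB, HhatABC, mul_add, mul_sub, trace_add, trace_sub,
    trace_mul_embedAB, trace_mul_embedBC, trace_mul_embedB, mul_neg, trace_neg,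
    condMutualInfo, vnEntropy, Complex.add_re, Complex.sub_re, Complex.neg_re]

end Tripartite

theorem abs_trace_condMutualSpectrum_le_general {A B C : Type*}
    [Fintype A] [Fintype B] [Fintype C] [DecidableEq A] [DecidableEq B] [DecidableEq C]
    (ρ : Matrix (A × B × C) (A × B × C) ℂ)
    (hpos : (ptraceBC (ρ * HhatACB ρ)).PosSemidef) (O : Matrix A A ℂ) :
    ‖Matrix.trace (ρ * HhatACB ρ * embedA O)‖ ≤ ‖O‖ * condMutualInfo ρ :=
  calc ‖trace (ρ * HhatACB ρ * embedA O)‖ = ‖trace (ptraceBC (ρ * HhatACB ρ) * O)‖ := by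
        rw [trace_mul_embedA]
    _ ≤ ‖O‖ * (trace (ptraceBC (ρ * HhatACB ρ))).re := hpos.norm_trace_mul_le O
    _ = ‖O‖ * condMutualInfo ρ := by rw [trace_ptraceBC, re_trace_mul_HhatACB]

/-- Lemma 1 of the paper: if `𝓘_A = Tr_BC(ρ Ĥ_{A:C|B})` is positive semidefinite, then the
correlation of the conditional mutual spectrum with any operator supported on `A` is bounded
by the conditional mutual information. -/
theorem abs_trace_condMutualSpectrum_le {A B C : Type*}
    [Fintype A] [Fintype B] [Fintype C] [DecidableEq A] [DecidableEq B] [DecidableEq C]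
    (ρ : Matrix (A × B × C) (A × B × C) ℂ)
    (hρ : ρ.PosDef) (htr : Matrix.trace ρ = 1)
    (hAB : (rhoAB ρ).PosDef) (hBC : (rhoBC ρ).PosDef) (hB : (rhoB ρ).PosDef)
    (hpos : (ptraceBC (ρ * HhatACB ρ)).PosSemidef) (O : Matrix A A ℂ) :
    ‖Matrix.trace (ρ * HhatACB ρ * embedA O)‖ ≤ ‖O‖ * condMutualInfo ρ :=
  abs_trace_condMutualSpectrum_le_general ρ hpos O
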